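/- Let A be a real n×n matrix, B a real n×1 matrix, C a real 1×n matrix, and φ : ℝ → ℝ Lipschitz continuous with constant L ≥ 0. Suppose there exist a real symmetric positive-definite n×n matrix P, μ > 0, and K ∈ ℝ such that P(A − BKC) + (A − BKC)ᵀP ≤ −μP and PB = Cᵀ. Let x : ℝ → ℝⁿ solve ẋ = A x + B φ(C x), and assume the master output y₁(t) = C x(t) is differentiable with |ẏ₁(t)| ≤ L_y for all t ≥ 0 and |y₁(0)| ≤ 2M, where the coder range M > 0 and sampling time T_s > 0 satisfy L_y·T_s ≤ M. Let the decoded signal ȳ₁ be produced by the first-order binary coder: c(0) = 0, c(k+1) = c(k) + M·sgn(y₁(k·T_s) − c(k)), and ȳ₁(t) = c(k) + M·sgn(y₁(k·T_s) − c(k)) for t ∈ [k·T_s, (k+1)·T_s). Let z : ℝ → ℝⁿ solve ż = A z + B φ(C z) + B u with u(t) = −(K + L)·(C z(t) − ȳ₁(t)). Then limsup_{t→∞} ‖z(t) − x(t)‖ ≤ 4M·(|K| + L)·√(Bᵀ P B) / (μ·√(λ_min(P))). In particular, choosing the minimal admissible range M = L_y·T_s = L_y/R, where R = 1/T_s is the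 channel transmission rate in bits per second, the bound equals 4(|K| + L)·√(Bᵀ P B)·L_y / (μ·√(λ_min(P))·R), i.e. the guaranteed limit synchronization error is proportional to the maximal rate L_y of the coupling signal and inversely proportional to the transmission rate R. -/

import Mathlib

/-!
The error `e = z - x` obeys `ė = (A - BKC) e + w B` with
`w = φ(Cz) - φ(Cx) - L·Ce - (K + L)(Cx - ȳ₁)`. Since `PB = Cᵀ`, the Lyapunov function
`V = eᵀPe` satisfies `V̇ ≤ -μV + 2 w·Ce`. The Lipschitz bound on `φ` makes
`(φ(Cz) - φ(Cx) - L·Ce)·Ce ≤ 0`, and the coder keeps `|Cx - ȳ₁| ≤ 2M` for all `t ≥ 0`: between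
samples `y₁` drifts by at most `L_y T_s ≤ M`, and each update moves the centre by `M` towards
`y₁`. With Cauchy–Schwarz `|Ce| ≤ √V √(BᵀPB)` this gives `V̇ ≤ -μV + b√V`,
`b = 4M(|K| + L)√(BᵀPB)`, hence `V̇ ≤ -(μ/2)(V - (b/μ)²)` and, by Grönwall,
`limsup V ≤ (b/μ)²`; finally `λ_min(P) ‖e‖² ≤ V`.
-/

open Matrix Filter Topology

namespace Matrix

variable {ι : Type*} [Fintype ι] {P : Matrix ι ι ℝ}

lemma IsHermitian.dotProduct_mulVec_comm (hP : P.IsHermitian) (u v : ι → ℝ) :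
    u ⬝ᵥ P *ᵥ v = v ⬝ᵥ P *ᵥ u := by
  have hPt : Pᵀ = P := by rw [← conjTranspose_eq_transpose_of_trivial, hP.eq]
  rw [dotProduct_mulVec, ← mulVec_transpose, hPt, dotProduct_comm]

lemma PosSemidef.dotProduct_mulVec_self_nonneg (hP : P.PosSemidef) (v : ι → ℝ) :
    0 ≤ v ⬝ᵥ P *ᵥ v := by
  simpa using hP.dotProduct_mulVec_nonneg v

lemma PosSemidef.dotProduct_mulVec_sq_le (hP : P.PosSemidef) (u w : ι → ℝ) :
    (u ⬝ᵥ P *ᵥ w) ^ 2 ≤ (u ⬝ᵥ P *ᵥ u) * (w ⬝ᵥ P *ᵥ w) := by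
  have hquad : ∀ r : ℝ,
      0 ≤ (w ⬝ᵥ P *ᵥ w) * (r * r) + 2 * (u ⬝ᵥ P *ᵥ w) * r + u ⬝ᵥ P *ᵥ u := by
    intro r
    convert hP.dotProduct_mulVec_self_nonneg (u + r • w) using 1
    simp only [mulVec_add, mulVec_smul, dotProduct_add, add_dotProduct, dotProduct_smul,
      smul_dotProduct, smul_eq_mul, hP.isHermitian.dotProduct_mulVec_comm w u]
    ring
  have := discrim_le_zero hquad
  rw [discrim] at this
  nlinarith

lemma PosSemidef.abs_dotProduct_mulVec_le (hP : P.PosSemidef) (u w : ι → ℝ) :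
    |u ⬝ᵥ P *ᵥ w| ≤ √(u ⬝ᵥ P *ᵥ u) * √(w ⬝ᵥ P *ᵥ w) := by
  rw [← Real.sqrt_mul (hP.dotProduct_mulVec_self_nonneg u)]
  exact Real.abs_le_sqrt (hP.dotProduct_mulVec_sq_le u w)

variable [DecidableEq ι]

lemma IsHermitian.iInf_eigenvalues_mul_le (hP : P.IsHermitian) (v : ι → ℝ) :
    (⨅ i, hP.eigenvalues i) * ∑ i, v i ^ 2 ≤ v ⬝ᵥ P *ᵥ v := by
  set U : Matrix ι ι ℝ := (hP.eigenvectorUnitary : Matrix ι ι ℝ)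
  set w := star U *ᵥ v
  have hvU : v ᵥ* U = w := by
    rw [← mulVec_transpose, ← conjTranspose_eq_transpose_of_trivial]; rfl
  have hUU : U * star U = 1 := mem_unitaryGroup_iff.mp hP.eigenvectorUnitary.2
  have hquad : v ⬝ᵥ P *ᵥ v = ∑ i, hP.eigenvalues i * w i ^ 2 := by
    conv_lhs => rw [hP.spectral_theorem, Unitary.conjStarAlgAut_apply]
    rw [← mulVec_mulVec, ← mulVec_mulVec, dotProduct_mulVec v U, hvU]
    simp only [dotProduct, mulVec_diagonal, Function.comp_apply, RCLike.ofReal_real_eq_id, id, sq]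
    exact Finset.sum_congr rfl fun i _ => by ring
  have hnorm : ∑ i, v i ^ 2 = ∑ i, w i ^ 2 := by
    have h : v ⬝ᵥ v = v ⬝ᵥ (U * star U) *ᵥ v := by rw [hUU, one_mulVec]
    rw [← mulVec_mulVec, dotProduct_mulVec v U, hvU] at h
    simpa [dotProduct, sq] using h
  rw [hquad, hnorm, Finset.mul_sum]
  gcongr with i
  exact ciInf_le (Set.finite_range _).bddBelow i

lemma PosDef.sqrt_sum_sq_le (hP : P.PosDef) (v : ι → ℝ) :
    √(∑ i, v i ^ 2) ≤ √(v ⬝ᵥ P *ᵥ v) / √(⨅ i, hP.1.eigenvalues i) := by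
  rcases isEmpty_or_nonempty ι with hι | hι
  · simp only [Finset.univ_eq_empty, Finset.sum_empty, Real.sqrt_zero]
    positivity
  have hmin : 0 < ⨅ i, hP.1.eigenvalues i := by
    obtain ⟨i, hi⟩ := exists_eq_ciInf_of_finite (f := hP.1.eigenvalues)
    exact hi ▸ hP.eigenvalues_pos i
  rw [← Real.sqrt_div' _ hmin.le]
  refine Real.sqrt_le_sqrt ?_
  rw [le_div_iff₀ hmin, mul_comm]
  exact hP.1.iInf_eigenvalues_mul_le v

end Matrix

section Calculus

variable {ι : Type*} [Fintype ι] {x : ℝ → ι → ℝ} {v : ι → ℝ} {t : ℝ}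

lemma HasDerivAt.const_dotProduct (h : HasDerivAt x v t) (C : ι → ℝ) :
    HasDerivAt (fun s => C ⬝ᵥ x s) (C ⬝ᵥ v) t :=
  HasDerivAt.fun_sum fun i _ => ((hasDerivAt_pi.1 h) i).const_mul (C i)

lemma HasDerivAt.dotProduct_mulVec_self {P : Matrix ι ι ℝ} (hP : P.IsHermitian)
    (h : HasDerivAt x v t) :
    HasDerivAt (fun s => x s ⬝ᵥ P *ᵥ x s) (2 * (x t ⬝ᵥ P *ᵥ v)) t := by
  have hcoord : ∀ i, HasDerivAt (fun s => x s i) (v i) t := hasDerivAt_pi.1 h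
  have hsum := HasDerivAt.fun_sum fun i (_ : i ∈ Finset.univ) =>
    (hcoord i).mul (h.const_dotProduct (P i))
  refine hsum.congr_deriv ?_
  rw [two_mul]
  nth_rewrite 1 [hP.dotProduct_mulVec_comm]
  simp only [dotProduct, mulVec, Finset.sum_add_distrib]

end Calculus

lemma le_add_mul_exp_of_hasDerivAt_le {f f' : ℝ → ℝ} {k S : ℝ} (hk : k ≠ 0)
    (hf : ∀ t, HasDerivAt f (f' t) t) (hf' : ∀ t ≥ 0, f' t ≤ -k * (f t - S))
    (t : ℝ) (ht : 0 ≤ t) : f t ≤ S + (f 0 - S) * Real.exp (-k * t) := by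
  have h := le_gronwallBound_of_liminf_deriv_right_le (δ := f 0) (K := -k) (ε := k * S)
    (fun u _ => (hf u).continuousAt.continuousWithinAt)
    (fun u _ _ hr => (hf u).hasDerivWithinAt.liminf_right_slope_le hr) le_rfl
    (fun u hu => by linarith [hf' u hu.1]) t ⟨ht, le_rfl⟩
  rw [gronwallBound_of_K_ne_0 (neg_ne_zero.2 hk), sub_zero] at h
  convert h using 1
  field_simp
  ring

lemma limsup_le_of_hasDerivAt_le_sqrt {V V' f : ℝ → ℝ} {μ b s : ℝ} (hμ : 0 < μ) (hb : 0 ≤ b)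
    (hs : 0 ≤ s) (hV : ∀ t, HasDerivAt V (V' t) t) (hV0 : ∀ t, 0 ≤ V t)
    (hV' : ∀ t ≥ 0, V' t ≤ -μ * V t + b * √(V t))
    (hf0 : ∀ t, 0 ≤ f t) (hfV : ∀ t, f t ≤ √(V t) / s) :
    limsup f atTop ≤ b / (μ * s) := by
  set S := (b / μ) ^ 2
  -- `-μV + b√V ≤ -(μ/2)(V - S)` is `(μ√V - b)² ≥ 0`
  have hV'' : ∀ t ≥ 0, V' t ≤ -(μ / 2) * (V t - S) := by
    intro t ht
    have hsq := Real.sq_sqrt (hV0 t)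
    have hS : μ ^ 2 * S = b ^ 2 := by simp only [S]; field_simp
    nlinarith [hV' t ht, sq_nonneg (μ * √(V t) - b)]
  set g : ℝ → ℝ := fun t => √(S + (V 0 - S) * Real.exp (-(μ / 2) * t)) / s
  have hg : Tendsto g atTop (𝓝 (b / (μ * s))) := by
    have hexp : Tendsto (fun t => Real.exp (-(μ / 2) * t)) atTop (𝓝 0) :=
      Real.tendsto_exp_atBot.comp (tendsto_id.const_mul_atTop_of_neg (by linarith))
    have := (((tendsto_const_nhds (x := S)).add (hexp.const_mul (V 0 - S))).sqrt).div_const s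
    rwa [mul_zero, add_zero, Real.sqrt_sq (div_nonneg hb hμ.le), div_div] at this
  have hfg : f ≤ᶠ[atTop] g := by
    filter_upwards [eventually_ge_atTop 0] with t ht
    refine (hfV t).trans (div_le_div_of_nonneg_right (Real.sqrt_le_sqrt ?_) hs)
    exact le_add_mul_exp_of_hasDerivAt_le (half_pos hμ).ne' hV hV'' t ht
  exact (limsup_le_limsup hfg (isCoboundedUnder_le_of_le atTop hf0)
    hg.isBoundedUnder_le).trans hg.limsup_eq.le

noncomputable def coderSign (v : ℝ) : ℝ := if 0 ≤ v then 1 else -1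

lemma abs_sub_add_mul_coderSign_le {a c₀ M : ℝ} (h : |a - c₀| ≤ 2 * M) :
    |a - (c₀ + M * coderSign (a - c₀))| ≤ M := by
  rw [abs_le] at h ⊢
  unfold coderSign
  split_ifs <;> constructor <;> linarith

section BinaryCoder

variable {y ybar : ℝ → ℝ} {c : ℕ → ℝ} {Ly Ts M : ℝ}

lemma abs_sub_coder_update_le (hLy : 0 ≤ Ly) (hLT : Ly * Ts ≤ M)
    (hlip : ∀ s ≥ 0, ∀ t ≥ 0, |y t - y s| ≤ Ly * |t - s|) {s t c₀ : ℝ} (hs : 0 ≤ s)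
    (hst : s ≤ t) (hts : t ≤ s + Ts) (hc₀ : |y s - c₀| ≤ 2 * M) :
    |y t - (c₀ + M * coderSign (y s - c₀))| ≤ 2 * M := by
  have hdrift : |y t - y s| ≤ Ly * Ts := by
    refine (hlip s hs t (hs.trans hst)).trans (mul_le_mul_of_nonneg_left ?_ hLy)
    rw [abs_of_nonneg (sub_nonneg.2 hst)]
    linarith
  calc |y t - (c₀ + M * coderSign (y s - c₀))|
      ≤ |y t - y s| + |y s - (c₀ + M * coderSign (y s - c₀))| := abs_sub_le _ _ _
    _ ≤ Ly * Ts + M := add_le_add hdrift (abs_sub_add_mul_coderSign_le hc₀)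
    _ ≤ 2 * M := by linarith

lemma abs_sub_coder_center_le (hTs : 0 ≤ Ts) (hLy : 0 ≤ Ly) (hLT : Ly * Ts ≤ M)
    (hlip : ∀ s ≥ 0, ∀ t ≥ 0, |y t - y s| ≤ Ly * |t - s|) (hy0 : |y 0| ≤ 2 * M) (hc0 : c 0 = 0)
    (hc : ∀ k : ℕ, c (k + 1) = c k + M * coderSign (y (k * Ts) - c k)) (k : ℕ) :
    |y (k * Ts) - c k| ≤ 2 * M := by
  induction k with
  | zero => simpa [hc0] using hy0
  | succ k ih =>
    rw [hc k]
    refine abs_sub_coder_update_le hLy hLT hlip (by positivity) ?_ ?_ ih <;>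
      push_cast <;> linarith

lemma abs_sub_coder_output_le (hTs : 0 < Ts) (hLy : 0 ≤ Ly) (hLT : Ly * Ts ≤ M)
    (hlip : ∀ s ≥ 0, ∀ t ≥ 0, |y t - y s| ≤ Ly * |t - s|) (hy0 : |y 0| ≤ 2 * M) (hc0 : c 0 = 0)
    (hc : ∀ k : ℕ, c (k + 1) = c k + M * coderSign (y (k * Ts) - c k))
    (hybar : ∀ k : ℕ, ∀ t ∈ Set.Ico ((k : ℝ) * Ts) ((k + 1 : ℝ) * Ts),
      ybar t = c k + M * coderSign (y (k * Ts) - c k))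
    (t : ℝ) (ht : 0 ≤ t) : |y t - ybar t| ≤ 2 * M := by
  set k := ⌊t / Ts⌋₊
  have hkt : (k : ℝ) * Ts ≤ t := (le_div_iff₀ hTs).1 (Nat.floor_le (div_nonneg ht hTs.le))
  have htk : t < (k + 1 : ℝ) * Ts := (div_lt_iff₀ hTs).1 (Nat.lt_floor_add_one _)
  rw [hybar k t ⟨hkt, htk⟩]
  exact abs_sub_coder_update_le hLy hLT hlip (by positivity) hkt (by linarith)
    (abs_sub_coder_center_le hTs.le hLy hLT hlip hy0 hc0 hc k)

end BinaryCoder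

lemma coupling_mul_le {L K M σ δ dφ : ℝ} (hL : 0 ≤ L) (hdφ : |dφ| ≤ L * |σ|)
    (hδ : |δ| ≤ 2 * M) :
    (dφ - (K + L) * (σ + δ) + K * σ) * σ ≤ 2 * M * (|K| + L) * |σ| := by
  have hφσ : dφ * σ ≤ L * σ ^ 2 := by
    calc dφ * σ ≤ |dφ| * |σ| := by rw [← abs_mul]; exact le_abs_self _
      _ ≤ L * |σ| * |σ| := by gcongr
      _ = L * σ ^ 2 := by rw [mul_assoc, abs_mul_abs_self, sq]
  have hδσ : -((K + L) * δ * σ) ≤ (|K| + L) * (2 * M) * |σ| := by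
    calc -((K + L) * δ * σ) ≤ |K + L| * |δ| * |σ| := by
          rw [← abs_mul, ← abs_mul]; exact neg_le_abs _
      _ ≤ (|K| + L) * (2 * M) * |σ| := by
          gcongr
          exact (abs_add_le K L).trans_eq (by rw [abs_of_nonneg hL])
  linarith

section Passification

variable {ι : Type*} [Fintype ι] {A P : Matrix ι ι ℝ} {B C : ι → ℝ} {K μ : ℝ}

lemma two_mul_dotProduct_mulVec_le_of_passified (hP : P.IsHermitian)
    (hLyap : ∀ v : ι → ℝ,
      v ⬝ᵥ (P * (A - K • vecMulVec B C) + (A - K • vecMulVec B C)ᵀ * P) *ᵥ v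
        ≤ -μ * (v ⬝ᵥ P *ᵥ v))
    (hPB : P *ᵥ B = C) (e : ι → ℝ) (w : ℝ) :
    2 * (e ⬝ᵥ P *ᵥ (A *ᵥ e + w • B))
      ≤ -μ * (e ⬝ᵥ P *ᵥ e) + 2 * ((w + K * (C ⬝ᵥ e)) * (C ⬝ᵥ e)) := by
  set A' := A - K • vecMulVec B C
  have hsplit : A *ᵥ e + w • B = A' *ᵥ e + (w + K * (C ⬝ᵥ e)) • B := by
    simp only [A', sub_mulVec, smul_mulVec, vecMulVec_mulVec, op_smul_eq_smul, smul_smul]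
    module
  have hsym : e ⬝ᵥ (P * A' + A'ᵀ * P) *ᵥ e = 2 * (e ⬝ᵥ P *ᵥ (A' *ᵥ e)) := by
    rw [add_mulVec, dotProduct_add, ← mulVec_mulVec, ← mulVec_mulVec, mulVec_transpose,
      dotProduct_comm e ((P *ᵥ e) ᵥ* A'), ← dotProduct_mulVec, dotProduct_comm (P *ᵥ e),
      hP.dotProduct_mulVec_comm (A' *ᵥ e), two_mul]
  have hB : e ⬝ᵥ P *ᵥ B = C ⬝ᵥ e := by rw [hPB, dotProduct_comm]
  rw [hsplit, mulVec_add, dotProduct_add, mulVec_smul, dotProduct_smul, hB, smul_eq_mul,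
    mul_add, ← hsym]
  linarith [hLyap e]

lemma sync_error_lyapunov_deriv_le (hP : P.PosDef)
    (hLyap : ∀ v : ι → ℝ,
      v ⬝ᵥ (P * (A - K • vecMulVec B C) + (A - K • vecMulVec B C)ᵀ * P) *ᵥ v
        ≤ -μ * (v ⬝ᵥ P *ᵥ v))
    (hPB : P *ᵥ B = C) {L M : ℝ} (hL : 0 ≤ L) (e : ι → ℝ) {dφ δ : ℝ}
    (hdφ : |dφ| ≤ L * |C ⬝ᵥ e|) (hδ : |δ| ≤ 2 * M) :
    2 * (e ⬝ᵥ P *ᵥ (A *ᵥ e + (dφ - (K + L) * (C ⬝ᵥ e + δ)) • B))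
      ≤ -μ * (e ⬝ᵥ P *ᵥ e) + 4 * M * (|K| + L) * √(B ⬝ᵥ P *ᵥ B) * √(e ⬝ᵥ P *ᵥ e) := by
  have hσ : |C ⬝ᵥ e| ≤ √(e ⬝ᵥ P *ᵥ e) * √(B ⬝ᵥ P *ᵥ B) := by
    simpa only [hPB, dotProduct_comm e C] using hP.posSemidef.abs_dotProduct_mulVec_le e B
  have hM : 0 ≤ M := by linarith [abs_nonneg δ]
  have hcoupling := coupling_mul_le (K := K) hL hdφ hδ
  have hgain : 2 * M * (|K| + L) * |C ⬝ᵥ e|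
      ≤ 2 * M * (|K| + L) * (√(e ⬝ᵥ P *ᵥ e) * √(B ⬝ᵥ P *ᵥ B)) := by
    gcongr
  linarith [two_mul_dotProduct_mulVec_le_of_passified hP.1 hLyap hPB e
    (dφ - (K + L) * (C ⬝ᵥ e + δ))]

end Passification

theorem controlled_sync_under_information_constraints_general {n : ℕ}
    (A : Matrix (Fin n) (Fin n) ℝ) (B C : Fin n → ℝ)
    (φ : ℝ → ℝ) (L : ℝ) (hL : 0 ≤ L)
    (hφ : ∀ y y' : ℝ, |φ y - φ y'| ≤ L * |y - y'|)
    (P : Matrix (Fin n) (Fin n) ℝ) (μ K : ℝ)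
    (hP : P.PosDef) (hμ : 0 < μ)
    (hLyap : ∀ v : Fin n → ℝ,
      v ⬝ᵥ (P * (A - K • vecMulVec B C) + (A - K • vecMulVec B C)ᵀ * P).mulVec v
        ≤ -μ * (v ⬝ᵥ P.mulVec v))
    (hPB : P.mulVec B = C)
    (Ly Ts M : ℝ) (hTs : 0 < Ts) (hLT : Ly * Ts ≤ M)
    (x : ℝ → Fin n → ℝ)
    (hx : ∀ t : ℝ, HasDerivAt x (A.mulVec (x t) + φ (C ⬝ᵥ x t) • B) t)
    (hrate : ∀ t ≥ (0 : ℝ), |deriv (fun s => C ⬝ᵥ x s) t| ≤ Ly)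
    (hy0 : |C ⬝ᵥ x 0| ≤ 2 * M)
    (c : ℕ → ℝ) (hc0 : c 0 = 0)
    (hc : ∀ k : ℕ, c (k + 1)
      = c k + M * (if 0 ≤ C ⬝ᵥ x (k * Ts) - c k then (1 : ℝ) else -1))
    (ybar : ℝ → ℝ)
    (hybar : ∀ k : ℕ, ∀ t ∈ Set.Ico ((k : ℝ) * Ts) ((k + 1 : ℝ) * Ts),
      ybar t = c k + M * (if 0 ≤ C ⬝ᵥ x (k * Ts) - c k then (1 : ℝ) else -1))
    (z : ℝ → Fin n → ℝ)
    (hz : ∀ t : ℝ, HasDerivAt z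
      (A.mulVec (z t) + φ (C ⬝ᵥ z t) • B
        + (-((K + L) * (C ⬝ᵥ z t - ybar t))) • B) t) :
    limsup (fun t => Real.sqrt (∑ i, (z t i - x t i) ^ 2)) atTop
      ≤ 4 * M * (|K| + L) * Real.sqrt (B ⬝ᵥ P.mulVec B)
        / (μ * Real.sqrt (⨅ i, hP.1.eigenvalues i))
    ∧ (M = Ly * Ts →
        4 * M * (|K| + L) * Real.sqrt (B ⬝ᵥ P.mulVec B)
            / (μ * Real.sqrt (⨅ i, hP.1.eigenvalues i))
          = 4 * (|K| + L) * Real.sqrt (B ⬝ᵥ P.mulVec B) * Ly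
            / (μ * Real.sqrt (⨅ i, hP.1.eigenvalues i) * (1 / Ts))) := by
  refine ⟨?_, fun hMeq => by subst hMeq; field_simp⟩
  have hy : ∀ t, HasDerivAt (fun s => C ⬝ᵥ x s) (C ⬝ᵥ (A *ᵥ x t + φ (C ⬝ᵥ x t) • B)) t :=
    fun t => (hx t).const_dotProduct C
  have hLy : 0 ≤ Ly := (abs_nonneg _).trans (hrate 0 le_rfl)
  have hlip : ∀ s ≥ 0, ∀ t ≥ 0, |C ⬝ᵥ x t - C ⬝ᵥ x s| ≤ Ly * |t - s| := fun s hs t ht =>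
    (convex_Ici 0).norm_image_sub_le_of_norm_deriv_le (fun u _ => (hy u).differentiableAt)
      hrate hs ht
  have htrack :=
    abs_sub_coder_output_le (y := fun s => C ⬝ᵥ x s) hTs hLy hLT hlip hy0 hc0 hc hybar
  have he : ∀ t, HasDerivAt (fun s => z s - x s) (A *ᵥ (z t - x t) + (φ (C ⬝ᵥ z t)
      - φ (C ⬝ᵥ x t) - (K + L) * (C ⬝ᵥ (z t - x t) + (C ⬝ᵥ x t - ybar t))) • B) t :=
    fun t => ((hz t).sub (hx t)).congr_deriv (by rw [mulVec_sub, dotProduct_sub]; module)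
  refine limsup_le_of_hasDerivAt_le_sqrt hμ ?_ (Real.sqrt_nonneg _)
    (fun t => (he t).dotProduct_mulVec_self hP.1)
    (fun t => hP.posSemidef.dotProduct_mulVec_self_nonneg _) (fun t ht => ?_)
    (fun t => Real.sqrt_nonneg _) (fun t => hP.sqrt_sum_sq_le _)
  · have hM : 0 ≤ M := by linarith [abs_nonneg (C ⬝ᵥ x 0)]
    exact mul_nonneg (mul_nonneg (by linarith) (add_nonneg (abs_nonneg K) hL)) (Real.sqrt_nonneg _)
  · refine sync_error_lyapunov_deriv_le hP hLyap hPB hL _ ?_ (htrack t ht)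
    simpa only [dotProduct_sub] using hφ (C ⬝ᵥ z t) (C ⬝ᵥ x t)

/-- Controlled synchronization under information constraints: with the master
output transmitted through a first-order binary coder of range `M` and sampling
time `T_s` (transmission rate `R = 1/T_s` bit/s) satisfying `L_y·T_s ≤ M`, the
limit synchronization error obeys
`limsup ‖z − x‖ ≤ 4M(|K|+L)√(BᵀPB)/(μ√(λ_min(P)))`; for the minimal admissible
range `M = L_y·T_s = L_y/R` this bound equals
`4(|K|+L)√(BᵀPB)·L_y/(μ√(λ_min(P))·R)`, i.e. it is proportional to the maximal
rate `L_y` of the coupling signal and inversely proportional to the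
transmission rate `R`. -/
theorem controlled_sync_under_information_constraints {n : ℕ}
    (A : Matrix (Fin n) (Fin n) ℝ) (B C : Fin n → ℝ)
    (φ : ℝ → ℝ) (L : ℝ) (hL : 0 ≤ L)
    (hφ : ∀ y y' : ℝ, |φ y - φ y'| ≤ L * |y - y'|)
    (P : Matrix (Fin n) (Fin n) ℝ) (μ K : ℝ)
    (hP : P.PosDef) (hμ : 0 < μ)
    (hLyap : ∀ v : Fin n → ℝ,
      v ⬝ᵥ (P * (A - K • vecMulVec B C) + (A - K • vecMulVec B C)ᵀ * P).mulVec v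
        ≤ -μ * (v ⬝ᵥ P.mulVec v))
    (hPB : P.mulVec B = C)
    (Ly Ts M : ℝ) (hTs : 0 < Ts) (hM : 0 < M) (hLT : Ly * Ts ≤ M)
    (x : ℝ → Fin n → ℝ)
    (hx : ∀ t : ℝ, HasDerivAt x (A.mulVec (x t) + φ (C ⬝ᵥ x t) • B) t)
    (hrate : ∀ t ≥ (0 : ℝ), |deriv (fun s => C ⬝ᵥ x s) t| ≤ Ly)
    (hy0 : |C ⬝ᵥ x 0| ≤ 2 * M)
    (c : ℕ → ℝ) (hc0 : c 0 = 0)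
    (hc : ∀ k : ℕ, c (k + 1)
      = c k + M * (if 0 ≤ C ⬝ᵥ x (k * Ts) - c k then (1 : ℝ) else -1))
    (ybar : ℝ → ℝ)
    (hybar : ∀ k : ℕ, ∀ t ∈ Set.Ico ((k : ℝ) * Ts) ((k + 1 : ℝ) * Ts),
      ybar t = c k + M * (if 0 ≤ C ⬝ᵥ x (k * Ts) - c k then (1 : ℝ) else -1))
    (z : ℝ → Fin n → ℝ)
    (hz : ∀ t : ℝ, HasDerivAt z
      (A.mulVec (z t) + φ (C ⬝ᵥ z t) • B
        + (-((K + L) * (C ⬝ᵥ z t - ybar t))) • B) t) :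
    limsup (fun t => Real.sqrt (∑ i, (z t i - x t i) ^ 2)) atTop
      ≤ 4 * M * (|K| + L) * Real.sqrt (B ⬝ᵥ P.mulVec B)
        / (μ * Real.sqrt (⨅ i, hP.1.eigenvalues i))
    ∧ (M = Ly * Ts →
        4 * M * (|K| + L) * Real.sqrt (B ⬝ᵥ P.mulVec B)
            / (μ * Real.sqrt (⨅ i, hP.1.eigenvalues i))
          = 4 * (|K| + L) * Real.sqrt (B ⬝ᵥ P.mulVec B) * Ly
            / (μ * Real.sqrt (⨅ i, hP.1.eigenvalues i) * (1 / Ts))) :=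
  controlled_sync_under_information_constraints_general A B C φ L hL hφ P μ K hP hμ hLyap hPB Ly Ts
    M hTs hLT x hx hrate hy0 c hc0 hc ybar hybar z hz
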